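/- Let E : ℝⁿ → ℝ be twice continuously differentiable with gradient g, let U ⊆ ℝⁿ be an open corridor for E, let h > 0 and θ₀ ∈ U, and define the gradient descent iterates θ_{k+1} = θ_k - h • g(θ_k). If the segment {θ₀ - s • g(θ₀) : s ∈ [0, n h]} lies in U, then the loss decreases linearly along the iterates: E(θ_k) = E(θ₀) - k h ‖g(θ₀)‖² for every k ≤ n. -/

import Mathlib

/-! Near a point `x` of the corridor the gradient flow through `x` exists (`∇E` is `C¹`, so
Picard–Lindelöf applies) and is a straight line, whose velocity must then be `-∇E x`; hence `∇E`
is constant on a short segment `x - t • ∇E x`. A continuation argument along `[0, n h]` spreads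
this over the whole segment `θ₀ - s • ∇E θ₀`, on which `E` therefore decreases at the constant
rate `‖∇E θ₀‖²`, and the gradient descent iterates stay on that segment, at `s = k h`. -/

/-- An open set `U ⊆ ℝⁿ` is a *corridor* for `E` if every solution of the gradient flow
`θ'(t) = -∇E(θ(t))` whose image lies in `U` is a straight line traveled at constant speed,
i.e. satisfies `θ(t) = θ(a) + (t - a) • v` for some fixed vector `v`. -/
def IsCorridor {n : ℕ} (E : EuclideanSpace ℝ (Fin n) → ℝ)
    (U : Set (EuclideanSpace ℝ (Fin n))) : Prop :=
  ∀ (a b : ℝ), a ≤ b → ∀ θ : ℝ → EuclideanSpace ℝ (Fin n),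
    (∀ t ∈ Set.Icc a b, HasDerivAt θ (-(gradient E (θ t))) t) →
    (∀ t ∈ Set.Icc a b, θ t ∈ U) →
    ∃ v : EuclideanSpace ℝ (Fin n), ∀ t ∈ Set.Icc a b, θ t = θ a + (t - a) • v

open Set Filter Topology

section Gradient

variable {F : Type*} [NormedAddCommGroup F] [InnerProductSpace ℝ F] [CompleteSpace F]

theorem ContDiff.gradient {E : F → ℝ} {k l : WithTop ℕ∞} (hE : ContDiff ℝ k E)
    (hlk : l + 1 ≤ k) : ContDiff ℝ l (gradient E) :=
  (InnerProductSpace.toDual ℝ F).symm.toContinuousLinearEquiv.contDiff.comp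
    (hE.fderiv_right hlk)

theorem apply_sub_smul_eq_of_gradient_eq {E : F → ℝ} (hE : Differentiable ℝ E) {x v w : F}
    {T : ℝ} (hgrad : ∀ s ∈ Icc 0 T, gradient E (x - s • v) = w) :
    ∀ s ∈ Icc 0 T, E (x - s • v) = E x - s * inner ℝ w v := by
  have hline : ∀ s, HasDerivAt (fun s : ℝ => x - s • v) (-v) s := fun s => by
    simpa using ((hasDerivAt_id s).smul_const v).const_sub x
  refine eq_of_has_deriv_right_eq (f' := fun _ => -inner ℝ w v)
    (fun s hs => (?_ : HasDerivAt _ _ s).hasDerivWithinAt)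
    (fun s _ => (?_ : HasDerivAt _ _ s).hasDerivWithinAt)
    (hE.continuous.comp (by fun_prop)).continuousOn (by fun_prop) (by simp)
  · have := (hE _).hasGradientAt.hasFDerivAt.comp_hasDerivAt s (hline s)
    simpa [Function.comp_def, hgrad s (Ico_subset_Icc_self hs), inner_neg_right] using this
  · simpa using ((hasDerivAt_id s).mul_const (inner ℝ w v)).const_sub (E x)

end Gradient

namespace IsCorridor

variable {n : ℕ} {E : EuclideanSpace ℝ (Fin n) → ℝ} {U : Set (EuclideanSpace ℝ (Fin n))}

theorem exists_velocity (hcor : IsCorridor E U) {a b : ℝ} (hab : a ≤ b)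
    {θ : ℝ → EuclideanSpace ℝ (Fin n)} (hθ : ∀ t ∈ Icc a b, HasDerivAt θ (-(gradient E (θ t))) t)
    (hθU : ∀ t ∈ Icc a b, θ t ∈ U) :
    ∃ v, (∀ t ∈ Icc a b, θ t = θ a + (t - a) • v) ∧ ∀ t ∈ Ioo a b, gradient E (θ t) = -v := by
  obtain ⟨v, hv⟩ := hcor a b hab θ hθ hθU
  refine ⟨v, hv, fun t ht => ?_⟩
  have hline : HasDerivAt θ v t := by
    have : HasDerivAt (fun s : ℝ => θ a + (s - a) • v) v t := by
      simpa using (((hasDerivAt_id t).sub_const a).smul_const v).const_add (θ a)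
    refine this.congr_of_eventuallyEq ?_
    filter_upwards [Ioo_mem_nhds ht.1 ht.2] with s hs using hv s (Ioo_subset_Icc_self hs)
  rw [← (hθ t (Ioo_subset_Icc_self ht)).unique hline, neg_neg]

theorem eventually_gradient_sub_smul_eq (hcor : IsCorridor E U) (hE : ContDiff ℝ 2 E)
    (hU : IsOpen U) {x : EuclideanSpace ℝ (Fin n)} (hx : x ∈ U) :
    ∀ᶠ t in 𝓝 (0 : ℝ), gradient E (x - t • gradient E x) = gradient E x := by
  obtain ⟨θ, hθ0, ε, hε, hθ⟩ := ((hE.gradient (l := 1) (by norm_num)).neg.contDiffAt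
    (x := x)).exists_forall_mem_closedBall_exists_eq_forall_mem_Ioo_hasDerivAt₀ 0
  have hθU : ∀ᶠ t in 𝓝 0, θ t ∈ U :=
    (hθ 0 (by simpa using hε)).continuousAt.preimage_mem_nhds (hθ0 ▸ hU.mem_nhds hx)
  obtain ⟨δ, hδ, hsub⟩ := Metric.nhds_basis_closedBall.mem_iff.1
    (hθU.and (Ioo_mem_nhds (a := 0 - ε) (b := 0 + ε) (by linarith) (by linarith)))
  rw [Real.closedBall_eq_Icc, zero_sub, zero_add] at hsub
  obtain ⟨v, hline, hgrad⟩ := hcor.exists_velocity (by linarith)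
    (fun t ht => hθ t (hsub ht).2) (fun t ht => (hsub ht).1)
  have hgx : gradient E x = -v := hθ0 ▸ hgrad 0 ⟨by linarith, hδ⟩
  filter_upwards [Ioo_mem_nhds (neg_neg_of_pos hδ) hδ] with t ht
  have hθt : θ t = x - t • gradient E x := by
    rw [hgx, hline t (Ioo_subset_Icc_self ht), ← hθ0, hline 0 ⟨by linarith, hδ.le⟩]
    module
  rw [← hθt, hgrad t ht, hgx]

end IsCorridor

theorem apply_sub_smul_eq_on_segment_of_eventually {F : Type*} [NormedAddCommGroup F]
    [NormedSpace ℝ F] {G : F → F} (hG : Continuous G)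
    {U : Set F} (hloc : ∀ y ∈ U, ∀ᶠ t in 𝓝 (0 : ℝ), G (y - t • G y) = G y)
    {x : F} {T : ℝ} (hseg : ∀ s ∈ Icc 0 T, x - s • G x ∈ U) :
    ∀ s ∈ Icc 0 T, G (x - s • G x) = G x := by
  have hclosed : IsClosed ({s : ℝ | G (x - s • G x) = G x} ∩ Icc 0 T) :=
    (isClosed_eq (by fun_prop) continuous_const).inter isClosed_Icc
  refine hclosed.Icc_subset_of_forall_mem_nhdsWithin (by simp) ?_
  rintro s ⟨hs, hsT⟩
  apply mem_nhdsWithin_of_mem_nhds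
  have hshift : Tendsto (fun r => r - s) (𝓝 s) (𝓝 0) := tendsto_sub_nhds_zero_iff.2 tendsto_id
  filter_upwards [hshift.eventually (hloc _ (hseg s (Ico_subset_Icc_self hsT)))] with r hr
  -- once `G y = G x` at `y = x - s • G x`, the ray from `y` is the segment continued past `s`
  rwa [hs, sub_sub, ← add_smul, add_sub_cancel] at hr

theorem iterate_eq_sub_smul_of_apply_eq {F : Type*} [AddCommGroup F] [Module ℝ F]
    {G : F → F} {θs : ℕ → F} {h : ℝ} (hrec : ∀ k, θs (k + 1) = θs k - h • G (θs k)) {n : ℕ}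
    (hG : ∀ k < n, G (θs 0 - ((k : ℝ) * h) • G (θs 0)) = G (θs 0)) :
    ∀ k ≤ n, θs k = θs 0 - ((k : ℝ) * h) • G (θs 0) := by
  intro k hk
  induction k with
  | zero => simp
  | succ k ih =>
    rw [hrec, ih (by omega), hG k hk]
    push_cast
    module

theorem loss_linear_along_gd_in_corridor_general {m : ℕ}
    (E : EuclideanSpace ℝ (Fin m) → ℝ) (hE : ContDiff ℝ 2 E)
    (U : Set (EuclideanSpace ℝ (Fin m))) (hU : IsOpen U) (hcor : IsCorridor E U)
    (h : ℝ) (hh : 0 < h)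
    (θ₀ : EuclideanSpace ℝ (Fin m))
    (θs : ℕ → EuclideanSpace ℝ (Fin m))
    (hθs0 : θs 0 = θ₀)
    (hrec : ∀ k : ℕ, θs (k + 1) = θs k - h • gradient E (θs k))
    (n : ℕ)
    (hseg : ∀ s ∈ Set.Icc (0 : ℝ) ((n : ℝ) * h), θ₀ - s • gradient E θ₀ ∈ U) :
    ∀ k ≤ n, E (θs k) = E θ₀ - (k : ℝ) * h * ‖gradient E θ₀‖ ^ 2 := by
  have hstep : ∀ k ≤ n, (k : ℝ) * h ∈ Icc 0 ((n : ℝ) * h) := fun k hk =>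
    ⟨by positivity, mul_le_mul_of_nonneg_right (Nat.cast_le.2 hk) hh.le⟩
  have hgrad : ∀ s ∈ Icc 0 ((n : ℝ) * h), gradient E (θ₀ - s • gradient E θ₀) = gradient E θ₀ :=
    apply_sub_smul_eq_on_segment_of_eventually (hE.gradient (l := 0) (by norm_num)).continuous
      (fun _ hy => hcor.eventually_gradient_sub_smul_eq hE hU hy) hseg
  have hloss := apply_sub_smul_eq_of_gradient_eq (hE.differentiable (by norm_num)) hgrad
  have hiter : ∀ k ≤ n, θs k = θ₀ - ((k : ℝ) * h) • gradient E θ₀ := by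
    subst hθs0
    exact iterate_eq_sub_smul_of_apply_eq hrec fun k hk => hgrad _ (hstep k hk.le)
  intro k hk
  rw [hiter k hk, hloss _ (hstep k hk), real_inner_self_eq_norm_sq, mul_assoc]

/-- **Linear loss decrease along gradient descent in corridors.** Let `U` be
an open corridor for `E` with gradient `g`, let `h > 0` and `θ₀ ∈ U`, and define the
gradient descent iterates `θ_{k+1} = θ_k - h • g(θ_k)`. If the segment
`{θ₀ - s • g(θ₀) : s ∈ [0, n h]}` lies in `U`, then the loss decreases linearly along the
iterates: `E(θ_k) = E(θ₀) - k h ‖g(θ₀)‖²` for every `k ≤ n`. -/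
theorem loss_linear_along_gd_in_corridor {m : ℕ}
    (E : EuclideanSpace ℝ (Fin m) → ℝ) (hE : ContDiff ℝ 2 E)
    (U : Set (EuclideanSpace ℝ (Fin m))) (hU : IsOpen U) (hcor : IsCorridor E U)
    (h : ℝ) (hh : 0 < h)
    (θ₀ : EuclideanSpace ℝ (Fin m)) (hθ₀ : θ₀ ∈ U)
    (θs : ℕ → EuclideanSpace ℝ (Fin m))
    (hθs0 : θs 0 = θ₀)
    (hrec : ∀ k : ℕ, θs (k + 1) = θs k - h • gradient E (θs k))
    (n : ℕ)
    (hseg : ∀ s ∈ Set.Icc (0 : ℝ) ((n : ℝ) * h), θ₀ - s • gradient E θ₀ ∈ U) :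
    ∀ k ≤ n, E (θs k) = E θ₀ - (k : ℝ) * h * ‖gradient E θ₀‖ ^ 2 :=
  loss_linear_along_gd_in_corridor_general E hE U hU hcor h hh θ₀ θs hθs0 hrec n hseg
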